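/- arXiv:2012.10687 — 2 statements merged into one kernel-verified Lean document; each statement's English description precedes it below -/
import Mathlib

section
/- With S, R, and Child Selections as above (entries r_{jm} treated as indeterminates), det(SR) is a nonzero polynomial in the variables r_{jm} if and only if there exists a Child Selection J with det(S^J) ≠ 0. -/
/-!
Expanding `det (S R)` multilinearly in the columns of `R` gives
`det (S R) = ∑_r (∏_m R_{r(m),m}) · det S^r` over all maps `r`. A term vanishes unless
`r(m) ∈ C(m)` for every `m` (otherwise a factor of the product is `0`) and `r` is injective
(otherwise `S^r` has two equal columns), so if every Child Selection has `det S^J = 0` the sum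
is zero. Conversely, evaluating at the indicator of the graph of a Child Selection `J` kills
every term except that of `J`, leaving `det S^J`.
-/

namespace Matrix

variable {m n R : Type*} [Fintype m] [DecidableEq m] [CommRing R]

theorem det_submatrix_id_eq_zero_of_not_injective (A : Matrix m n R) {r : m → n}
    (hr : ¬Function.Injective r) : (A.submatrix id r).det = 0 := by
  obtain ⟨i, j, hij, hne⟩ := Function.not_injective_iff.mp hr
  exact det_zero_of_column_eq hne fun k => by simp [hij]

theorem det_mul_eq_sum_prod_mul_det_submatrix [Fintype n] (A : Matrix m n R) (B : Matrix n m R) :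
    (A * B).det = ∑ r : m → n, (∏ i, B (r i) i) * (A.submatrix id r).det := by
  have hrows : (A * B)ᵀ = fun i => ∑ k, B k i • Aᵀ k := by
    ext i j
    simp [mul_apply, Finset.sum_apply, mul_comm]
  rw [← det_transpose, hrows]
  change detRowAlternating.toMultilinearMap _ = _
  rw [MultilinearMap.map_sum]
  refine Finset.sum_congr rfl fun r _ => ?_
  rw [MultilinearMap.map_smul_univ, smul_eq_mul]
  congr 1
  exact det_transpose (A.submatrix id r)

end Matrix

open MvPolynomial

section SymbolicMatrix

variable {m n K : Type*} [Fintype m] [DecidableEq n] [CommRing K]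
  {C : m → Finset n} {R : Matrix n m (MvPolynomial (n × m) K)}

theorem eval_prod_apply_eq_ite (hR : ∀ j i, R j i = if j ∈ C i then X (j, i) else 0)
    {J : m → n} (hJ : ∀ i, J i ∈ C i) (r : m → n) :
    eval (fun p : n × m => if p.1 = J p.2 then (1 : K) else 0) (∏ i, R (r i) i) =
      if r = J then 1 else 0 := by
  have hfactor : ∀ i, eval (fun p : n × m => if p.1 = J p.2 then (1 : K) else 0) (R (r i) i) =
      if r i = J i then 1 else 0 := by
    intro i
    by_cases hri : r i ∈ C i
    · simp [hR, hri]
    · have : r i ≠ J i := fun h => hri (h ▸ hJ i)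
      simp [hR, hri, this]
  rw [map_prod, Finset.prod_congr rfl fun i _ => hfactor i, Finset.prod_boole]
  simp [funext_iff]

theorem det_map_C_mul_ne_zero_iff [DecidableEq m] [Fintype n] (S : Matrix m n K)
    (hR : ∀ j i, R j i = if j ∈ C i then X (j, i) else 0) :
    (S.map MvPolynomial.C * R).det ≠ 0 ↔
      ∃ J : m → n, Function.Injective J ∧ (∀ i, J i ∈ C i) ∧ (S.submatrix id J).det ≠ 0 := by
  have hexpand : (S.map MvPolynomial.C * R).det =
      ∑ r : m → n, (∏ i, R (r i) i) * MvPolynomial.C (S.submatrix id r).det := by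
    -- the product elaborates with the `CStarMatrix` instance, so `rw` cannot match it
    refine (Matrix.det_mul_eq_sum_prod_mul_det_submatrix _ _).trans ?_
    simp only [← Matrix.submatrix_map, RingHom.map_det, RingHom.mapMatrix_apply]
  rw [hexpand]
  constructor
  · intro hne
    by_contra! hnone
    refine hne (Finset.sum_eq_zero fun r _ => ?_)
    by_cases hinj : Function.Injective r
    · by_cases hrC : ∀ i, r i ∈ C i
      · simp [hnone r hinj hrC]
      · obtain ⟨i, hi⟩ := not_forall.mp hrC
        rw [Finset.prod_eq_zero (Finset.mem_univ i) (by simp [hR, hi]), zero_mul]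
    · simp [Matrix.det_submatrix_id_eq_zero_of_not_injective S hinj]
  · rintro ⟨J, -, hJC, hJdet⟩ hzero
    apply hJdet
    have := congrArg (eval fun p : n × m => if p.1 = J p.2 then (1 : K) else 0) hzero
    simpa [map_sum, eval_prod_apply_eq_ite hR hJC] using this

end SymbolicMatrix

/-- det(SR) is a nonzero polynomial in the indeterminates r_{jm}
iff there exists a Child Selection J with det(S^J) ≠ 0. -/
theorem stmt3 (M N : ℕ) (S : Matrix (Fin M) (Fin N) ℝ)
    (C : Fin M → Finset (Fin N))
    (R : Matrix (Fin N) (Fin M) (MvPolynomial (Fin N × Fin M) ℝ))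
    (hR : ∀ j m, R j m = if j ∈ C m then MvPolynomial.X (j, m) else 0) :
    (S.map MvPolynomial.C * R).det ≠ 0 ↔
      ∃ J : Fin M → Fin N, Function.Injective J ∧ (∀ m, J m ∈ C m) ∧
        (S.submatrix id J).det ≠ 0 :=
  det_map_C_mul_ne_zero_iff S hR
end

section
/- In the setting above, Φ^{m*}_{j'} is algebraically nonzero if and only if there exists a Child Selection J with j' ∈ J(M) and det(S^{J∖j' ∪ e_{m*}}) ≠ 0. -/
open scoped Classical

/-- The field of rational functions in the indeterminates indexed by σ. -/
noncomputable abbrev RatFunField (σ : Type) := FractionRing (MvPolynomial σ ℝ)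

/-!
Clearing the denominator `det A`, the flux response is nonzero iff the polynomial entry
`(R * adj (S R)) j' m*` is. By Cramer's rule this entry is `det (S' R)`, where `S'` is `S` with
row `m*` replaced by `e_{j'}ᵀ`. Expanding `det (S' R)` multilinearly in its columns gives
`∑ J, det (S'^J) * ∏ m, R (J m) m`; for admissible `J` the products are pairwise distinct
monomials, so the entry is nonzero iff some `det (S'^J)` is. That minor vanishes unless `J` is
injective and hits `j'`, say `J m₀ = j'`, and then it is the cofactor `adj (S^J) m₀ m*`, which is
also `det (S^{J∖j' ∪ e_{m*}})`.
-/

open Finset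

namespace Matrix

theorem det_mul_eq_sum_det_submatrix_mul_prod {m n R : Type*} [Fintype m] [DecidableEq m]
    [Fintype n] [CommRing R] (T : Matrix m n R) (B : Matrix n m R) :
    (T * B).det = ∑ J : m → n, (T.submatrix id J).det * ∏ i, B (J i) i := by
  simp only [det_apply', mul_apply, prod_univ_sum, Fintype.piFinset_univ, mul_sum, sum_mul,
    submatrix_apply, id, prod_mul_distrib]
  rw [sum_comm]
  simp only [mul_assoc]

theorem det_submatrix_eq_zero_of_not_injective {m n R : Type*} [Fintype m] [DecidableEq m]
    [CommRing R] (T : Matrix m n R) {J : m → n} (hJ : ¬Function.Injective J) :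
    (T.submatrix id J).det = 0 := by
  obtain ⟨a, b, hab, hne⟩ := Function.not_injective_iff.mp hJ
  exact det_zero_of_column_eq hne fun i => by simp [hab]

theorem submatrix_updateCol_of_injective {m n R : Type*} [DecidableEq m] [DecidableEq n]
    (T : Matrix m n R) {J : m → n} (hJ : Function.Injective J) (k : m) (v : m → R) :
    (T.updateCol (J k) v).submatrix id J = (T.submatrix id J).updateCol k v := by
  ext i k'
  simp [updateCol_apply, hJ.eq_iff]

theorem submatrix_updateRow_single_of_injective {m n R : Type*} [DecidableEq m] [DecidableEq n]
    [Zero R] [One R] (T : Matrix m n R) {J : m → n} (hJ : Function.Injective J) (k i : m) :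
    (T.updateRow k (Pi.single (J i) 1)).submatrix id J =
      (T.submatrix id J).updateRow k (Pi.single i 1) := by
  ext i' k'
  simp [updateRow_apply, Pi.single_apply, hJ.eq_iff]

theorem updateRow_single_one_mul {l m n R : Type*} [DecidableEq l] [Fintype m] [DecidableEq m]
    [NonAssocSemiring R] (S : Matrix l m R) (B : Matrix m n R) (k : l) (j : m) :
    S.updateRow k (Pi.single j 1) * B = (S * B).updateRow k (B j) := by
  rw [updateRow_mul, single_one_vecMul]
  rfl

theorem mul_adjugate_apply_eq_det_updateRow {l n R : Type*} [Fintype n] [DecidableEq n]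
    [CommRing R] (B : Matrix l n R) (A : Matrix n n R) (i : l) (k : n) :
    (B * adjugate A) i k = (A.updateRow k (B i)).det := by
  rw [← cramer_transpose_apply, cramer_eq_adjugate_mulVec, ← adjugate_transpose, mulVec_transpose]
  rfl

theorem det_updateRow_single_eq_det_updateCol_single {n R : Type*} [Fintype n] [DecidableEq n]
    [CommRing R] (A : Matrix n n R) (i k : n) :
    (A.updateRow k (Pi.single i 1)).det = (A.updateCol i (Pi.single k 1)).det := by
  rw [← adjugate_apply, ← cramer_apply, cramer_eq_adjugate_mulVec, mulVec_single_one]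
  rfl

theorem det_submatrix_updateRow_single {m n R : Type*} [Fintype m] [DecidableEq m]
    [DecidableEq n] [CommRing R] (S : Matrix m n R) (J : m → n) (k : m) (j : n) :
    ((S.updateRow k (Pi.single j 1)).submatrix id J).det =
      if j ∈ Set.range J then ((S.updateCol j (Pi.single k 1)).submatrix id J).det else 0 := by
  by_cases hJ : Function.Injective J
  swap
  · simp [det_submatrix_eq_zero_of_not_injective _ hJ]
  split_ifs with hj
  · obtain ⟨i, rfl⟩ := hj
    rw [submatrix_updateRow_single_of_injective _ hJ, submatrix_updateCol_of_injective _ hJ,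
      det_updateRow_single_eq_det_updateCol_single]
  · refine det_eq_zero_of_row_eq_zero k fun i => ?_
    have : J i ≠ j := fun h => hj ⟨i, h⟩
    simp [this]

theorem mul_inv_apply_ne_zero_iff {l n K : Type*} [Fintype n] [DecidableEq n] [Field K]
    (B : Matrix l n K) {A : Matrix n n K} (hA : A.det ≠ 0) (i : l) (k : n) :
    (B * A⁻¹) i k ≠ 0 ↔ (B * adjugate A) i k ≠ 0 := by
  rw [inv_def, Matrix.mul_smul, smul_apply, smul_eq_mul, Ring.inverse_eq_inv, mul_ne_zero_iff]
  simp [hA]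

end Matrix

open MvPolynomial

theorem MvPolynomial.sum_monomial_ne_zero_iff {ι σ R : Type*} [Fintype ι] [CommSemiring R]
    {f : ι → σ →₀ ℕ} (hf : Function.Injective f) (c : ι → R) :
    ∑ i, monomial (f i) (c i) ≠ 0 ↔ ∃ i, c i ≠ 0 := by
  refine ⟨fun h => ?_, fun ⟨i, hi⟩ h => hi ?_⟩
  · by_contra! hc
    simp [hc] at h
  · simpa [coeff_sum, coeff_monomial, hf.eq_iff] using congrArg (coeff (f i)) h

noncomputable def symbolicMatrix {m n : Type*} [DecidableEq n] (R : Type*) [CommSemiring R]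
    (s : m → Finset n) : Matrix n m (MvPolynomial (n × m) R) :=
  Matrix.of fun j k => if j ∈ s k then X (j, k) else 0

noncomputable def graphExponent {m n : Type*} [Fintype m] (J : m → n) : n × m →₀ ℕ :=
  ∑ k, Finsupp.single (J k, k) 1

theorem graphExponent_apply {m n : Type*} [Fintype m] [DecidableEq n] (J : m → n) (j : n)
    (k : m) : graphExponent J (j, k) = if J k = j then 1 else 0 := by
  rw [graphExponent, Finsupp.finsetSum_apply, Finset.sum_eq_single k]
  · simp [Finsupp.single_apply]
  · intro b _ hb
    simp [hb]
  · simp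

theorem graphExponent_injective {m n : Type*} [Fintype m] :
    Function.Injective (graphExponent : (m → n) → n × m →₀ ℕ) := by
  intro J₁ J₂ h
  funext k
  have := DFunLike.congr_fun h (J₁ k, k)
  simp only [graphExponent_apply, if_true] at this
  split_ifs at this with h'
  exact h'.symm

theorem prod_symbolicMatrix_apply {m n R : Type*} [Fintype m] [DecidableEq n] [CommSemiring R]
    (s : m → Finset n) (J : m → n) :
    ∏ k, symbolicMatrix R s (J k) k =
      if ∀ k, J k ∈ s k then monomial (graphExponent J) 1 else 0 := by
  split_ifs with hJ
  · simp [symbolicMatrix, hJ, graphExponent, monomial_sum_one, X]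
  · obtain ⟨k, hk⟩ := not_forall.mp hJ
    exact prod_eq_zero (mem_univ k) (by simp [symbolicMatrix, hk])

-- Naming `σ` makes the product elaborate in `Matrix`, not in the type synonym `CStarMatrix`.
theorem mul_adjugate_symbolicMatrix_apply_ne_zero_iff {m n R : Type*} [Fintype m] [DecidableEq m]
    [Fintype n] [DecidableEq n] [CommRing R] (S : Matrix m n R) (s : m → Finset n) (j : n)
    (k : m) :
    (symbolicMatrix R s * (S.map (MvPolynomial.C (σ := n × m)) * symbolicMatrix R s).adjugate)
        j k ≠ 0 ↔
      ∃ J : m → n, (∀ i, J i ∈ s i) ∧ j ∈ Set.range J ∧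
        ((S.updateCol j (Pi.single k 1)).submatrix id J).det ≠ 0 := by
  have hexpand :
      (symbolicMatrix R s * (S.map (MvPolynomial.C (σ := n × m)) * symbolicMatrix R s).adjugate)
        j k = ∑ J : m → n, monomial (graphExponent J)
          (if ∀ i, J i ∈ s i then ((S.updateRow k (Pi.single j 1)).submatrix id J).det else 0) := by
    rw [Matrix.mul_adjugate_apply_eq_det_updateRow, ← Matrix.updateRow_single_one_mul,
      Matrix.det_mul_eq_sum_det_submatrix_mul_prod]
    refine Finset.sum_congr rfl fun J _ => ?_
    have hdet : (((S.map MvPolynomial.C).updateRow k (Pi.single j 1)).submatrix id J).det =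
        MvPolynomial.C (σ := n × m) ((S.updateRow k (Pi.single j 1)).submatrix id J).det := by
      rw [RingHom.map_det]
      congr
      ext i i'
      simp [Matrix.updateRow_apply, Pi.single_apply, apply_ite MvPolynomial.C]
    rw [prod_symbolicMatrix_apply, hdet]
    split_ifs <;> simp [C_mul_monomial]
  rw [hexpand, sum_monomial_ne_zero_iff graphExponent_injective]
  simp only [ite_ne_right_iff, Matrix.det_submatrix_updateRow_single]

/-- The flux response Φ^{m*}_{j'} is algebraically nonzero iff there
exists a Child Selection J with j' ∈ J(M) and det(S^{J∖j' ∪ e_{m*}}) ≠ 0. -/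
theorem stmt7 (M N : ℕ) (mstar : Fin M) (j' : Fin N)
    (S : Matrix (Fin M) (Fin N) ℝ)
    (C : Fin M → Finset (Fin N))
    (ι : ℝ → RatFunField (Fin N × Fin M))
    (hι : ∀ x, ι x = algebraMap (MvPolynomial (Fin N × Fin M) ℝ) _ (MvPolynomial.C x))
    (r : Fin N × Fin M → RatFunField (Fin N × Fin M))
    (hr : ∀ p, r p = algebraMap (MvPolynomial (Fin N × Fin M) ℝ) _ (MvPolynomial.X p))
    (R : Matrix (Fin N) (Fin M) (RatFunField (Fin N × Fin M)))
    (hR : ∀ j m, R j m = if j ∈ C m then r (j, m) else 0)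
    (A : Matrix (Fin M) (Fin M) (RatFunField (Fin N × Fin M)))
    (hA : A = S.map ι * R)
    (hdet : A.det ≠ 0) :
    -((R * A⁻¹) j' mstar) ≠ 0 ↔
      ∃ J : Fin M → Fin N,
        Function.Injective J ∧ (∀ m, J m ∈ C m) ∧ j' ∈ Set.range J ∧
        (Matrix.of (fun i m => if J m = j' then (if i = mstar then (1 : ℝ) else 0)
            else S i (J m))).det ≠ 0 := by
  set φ := algebraMap (MvPolynomial (Fin N × Fin M) ℝ) (RatFunField (Fin N × Fin M))
  set P := symbolicMatrix ℝ C
  have hRP : R = P.map φ := by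
    ext j m
    simp [P, hR, hr, symbolicMatrix, apply_ite φ]
  have hAP : A = (S.map (MvPolynomial.C (σ := Fin N × Fin M)) * P).map φ := by
    rw [hA, hRP, Matrix.map_mul, Matrix.map_map]
    congr
    exact funext hι
  have hnum : (R * A.adjugate) j' mstar =
      φ ((P * (S.map (MvPolynomial.C (σ := Fin N × Fin M)) * P).adjugate) j' mstar) := by
    rw [hRP, hAP, ← RingHom.mapMatrix_apply, ← RingHom.map_adjugate, RingHom.mapMatrix_apply,
      ← Matrix.map_mul, Matrix.map_apply]
  have hminor : ∀ J : Fin M → Fin N,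
      Matrix.of (fun i m => if J m = j' then (if i = mstar then (1 : ℝ) else 0) else S i (J m)) =
        (S.updateCol j' (Pi.single mstar 1)).submatrix id J := by
    intro J
    ext i m
    simp [Matrix.updateCol_apply, Pi.single_apply]
  rw [neg_ne_zero, Matrix.mul_inv_apply_ne_zero_iff _ hdet, hnum,
    map_ne_zero_iff φ (IsFractionRing.injective _ _),
    mul_adjugate_symbolicMatrix_apply_ne_zero_iff]
  simp only [hminor]
  refine exists_congr fun J => ⟨fun h => ⟨?_, h⟩, And.right⟩
  by_contra hJ
  exact h.2.2 (Matrix.det_submatrix_eq_zero_of_not_injective _ hJ)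
end
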